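/- arXiv:1504.03457 — 4 statements merged into one kernel-verified Lean document; each statement's English description precedes it below -/
import Mathlib

section
/- Let R0 > 0, T > 0, L0 > 0, δ > 0 and let f : ℝ × [R0,∞) → ℝ be continuous and T-periodic in its first variable, satisfying: there exist constants μ̌ ≤ μ̂ and a nonnegative integer N with (Nπ/T)² < μ̌, μ̂ < ((N+1)π/T)², and μ̌ ≤ liminf_{ρ→+∞} f(t,ρ)/ρ ≤ limsup_{ρ→+∞} f(t,ρ)/ρ ≤ μ̂ uniformly in t. Then there exists χ̄ > 0 such that for every χ ≥ χ̄ there exist R = R(χ) > 0 and a positive integer n₁ = n₁(χ) with the following property: every solution x of x'' + g_n(L,t,x) = 0 with n > n₁ and L ∈ [0,L0], satisfying (x(t0),x'(t0)) ∈ closure(B_χ) ∩ Π⁺ at some time t0 ∈ [0,T], satisfies (x(t),x'(t)) ∈ Ξ_R^{n₁} for every t ∈ [t0, t0+T]. -/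
/-!
Along a solution, consider the energy `E = y² + φₙ(x)`, where `φₙ(x) = n x²` for `x ≤ 0` and
`φₙ(x) = x²` for `x ≥ 0`; it is `C¹` since both pieces vanish to second order at `0`.
On `x ≤ 0` the equation is linear, `x'' + n x - δ = 0`, so `E' = 2δy`. On `x > 0`, the bounds on
`f(t,ρ)/ρ` for large `ρ`, continuity and periodicity give `|gₙ(L,t,x)| ≤ A + B x` uniformly in
`n` and `L`. Hence `E' ≤ C E + K` with `C`, `K` independent of `n`, and Grönwall's inequality
bounds `E` over one period in terms of `χ` alone. As `n ≥ 1`, `x² + y² ≤ E`, which puts the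
orbit in `Ξ_R^1`.
-/

open Real Filter Set

/-- `g(L,t,r) = −L²/(r+R0)³ + f(t, r+R0)`. -/
noncomputable def gFun (R0 : ℝ) (f : ℝ → ℝ → ℝ) (L t r : ℝ) : ℝ :=
  -(L ^ 2) / (r + R0) ^ 3 + f t (r + R0)

/-- The approximating nonlinearity `g_n`. -/
noncomputable def gApprox (R0 δ : ℝ) (f : ℝ → ℝ → ℝ) (n : ℕ) (L t x : ℝ) : ℝ :=
  if 1 / (n : ℝ) ≤ x then gFun R0 f L t x
  else if 0 < x then (n : ℝ) * x * (gFun R0 f L t x + δ) - δ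
  else (n : ℝ) * x - δ

/-- The right half-plane `Π⁺`. -/
def PiPlus : Set (ℝ × ℝ) := {q | 0 ≤ q.1}

/-- The left half-plane `Π⁻`. -/
def PiMinus : Set (ℝ × ℝ) := {q | q.1 ≤ 0}

/-- The open ball `B_s` of radius `s` centered at the origin. -/
def Bball (s : ℝ) : Set (ℝ × ℝ) := {q | q.1 ^ 2 + q.2 ^ 2 < s ^ 2}

/-- The open region `Σ_c^n` delimited by the ellipse `y² + nx² − 2δx = c²`. -/
def SigmaSet (δ : ℝ) (n : ℕ) (c : ℝ) : Set (ℝ × ℝ) :=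
  {q | q.2 ^ 2 + (n : ℝ) * q.1 ^ 2 - 2 * δ * q.1 < c ^ 2}

/-- `Ξ_c^n = (Π⁻ ∩ Σ_c^n) ∪ (Π⁺ ∩ B_c)`. -/
def XiSet (δ : ℝ) (n : ℕ) (c : ℝ) : Set (ℝ × ℝ) :=
  (PiMinus ∩ SigmaSet δ n c) ∪ (PiPlus ∩ Bball c)

theorem exists_abs_le_of_periodic {f : ℝ → ℝ → ℝ} {T a b : ℝ} (hT : 0 < T)
    (hf : ContinuousOn (fun q : ℝ × ℝ => f q.1 q.2) (univ ×ˢ Icc a b))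
    (hper : ∀ t ρ, f (t + T) ρ = f t ρ) :
    ∃ C, ∀ t, ∀ ρ ∈ Icc a b, |f t ρ| ≤ C := by
  obtain ⟨C, hC⟩ := (isCompact_Icc.prod isCompact_Icc : IsCompact (Icc 0 T ×ˢ Icc a b))
    |>.exists_bound_of_continuousOn (hf.mono (prod_mono (subset_univ _) subset_rfl))
  refine ⟨C, fun t ρ hρ => ?_⟩
  obtain ⟨s, hs, hts⟩ := Function.Periodic.exists_mem_Ico₀ (f := fun s => f s ρ)
    (fun s => hper s ρ) hT t
  simpa only [hts, Real.norm_eq_abs] using hC (s, ρ) ⟨Ico_subset_Icc_self hs, hρ⟩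

theorem abs_le_mul_of_lt_div_lt {a b y ρ : ℝ} (hρ : 0 < ρ) (ha : a < y / ρ) (hb : y / ρ < b) :
    |y| ≤ max |a| |b| * ρ := by
  rw [lt_div_iff₀ hρ] at ha
  rw [div_lt_iff₀ hρ] at hb
  rw [abs_le]
  constructor <;> nlinarith [neg_abs_le a, le_abs_self b, le_max_left |a| |b|,
    le_max_right |a| |b|]

theorem exists_abs_le_add_mul {f : ℝ → ℝ → ℝ} {R0 T a b : ℝ} (hR0 : 0 < R0) (hT : 0 < T)
    (hf : ContinuousOn (fun q : ℝ × ℝ => f q.1 q.2) (univ ×ˢ Ici R0))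
    (hper : ∀ t ρ, f (t + T) ρ = f t ρ)
    (hlo : ∃ M, R0 ≤ M ∧ ∀ t ρ, M ≤ ρ → a < f t ρ / ρ)
    (hhi : ∃ M, R0 ≤ M ∧ ∀ t ρ, M ≤ ρ → f t ρ / ρ < b) :
    ∃ C B, ∀ t ρ, R0 ≤ ρ → |f t ρ| ≤ C + B * ρ := by
  obtain ⟨M₁, hRM₁, hM₁⟩ := hlo
  obtain ⟨M₂, -, hM₂⟩ := hhi
  obtain ⟨C, hC⟩ := exists_abs_le_of_periodic hT
    (hf.mono (prod_mono subset_rfl Icc_subset_Ici_self)) hper (b := max M₁ M₂)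
  have hB : 0 ≤ max |a| |b| := le_max_of_le_left (abs_nonneg a)
  refine ⟨C, max |a| |b|, fun t ρ hρ => ?_⟩
  have hρ0 : 0 < ρ := hR0.trans_le hρ
  rcases le_total ρ (max M₁ M₂) with hρM | hρM
  · linarith [hC t ρ ⟨hρ, hρM⟩, mul_nonneg hB hρ0.le]
  · have hC0 : 0 ≤ C := (abs_nonneg _).trans (hC t R0 ⟨le_rfl, le_max_of_le_left hRM₁⟩)
    linarith [abs_le_mul_of_lt_div_lt hρ0 (hM₁ t ρ (le_of_max_le_left hρM))
      (hM₂ t ρ (le_of_max_le_right hρM))]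

theorem abs_gFun_le {R0 L0 C B L t u : ℝ} {f : ℝ → ℝ → ℝ} (hR0 : 0 < R0)
    (hf : ∀ t ρ, R0 ≤ ρ → |f t ρ| ≤ C + B * ρ) (hL : |L| ≤ L0) (hu : 0 ≤ u) :
    |gFun R0 f L t u| ≤ L0 ^ 2 / R0 ^ 3 + C + B * R0 + B * u := by
  have hcentrifugal : |-(L ^ 2) / (u + R0) ^ 3| ≤ L0 ^ 2 / R0 ^ 3 := by
    rw [neg_div, abs_neg, abs_of_nonneg (by positivity), ← sq_abs L]
    gcongr
    linarith
  calc |gFun R0 f L t u| ≤ |-(L ^ 2) / (u + R0) ^ 3| + |f t (u + R0)| := abs_add_le _ _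
    _ ≤ L0 ^ 2 / R0 ^ 3 + (C + B * (u + R0)) := add_le_add hcentrifugal (hf t _ (by linarith))
    _ = _ := by ring

theorem gApprox_of_nonpos {R0 δ L t u : ℝ} {f : ℝ → ℝ → ℝ} {n : ℕ} (hn : 0 < n) (hu : u ≤ 0) :
    gApprox R0 δ f n L t u = n * u - δ := by
  have : u < 1 / (n : ℝ) := hu.trans_lt (by positivity)
  rw [gApprox, if_neg this.not_ge, if_neg hu.not_gt]

theorem abs_gApprox_le {R0 δ L t A B u : ℝ} {f : ℝ → ℝ → ℝ} {n : ℕ} (hδ : 0 ≤ δ)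
    (hg : ∀ u, 0 ≤ u → |gFun R0 f L t u| ≤ A + B * u) (hu : 0 ≤ u) :
    |gApprox R0 δ f n L t u| ≤ A + 2 * δ + B * u := by
  have hA : 0 ≤ A := by simpa using (abs_nonneg _).trans (hg 0 le_rfl)
  have hgu := hg u hu
  unfold gApprox
  split_ifs with hfar hpos
  · linarith
  · have hn : (0 : ℝ) < n := by
      rcases (Nat.cast_nonneg (α := ℝ) n).lt_or_eq with h | h
      · exact h
      · rw [← h, div_zero] at hfar; linarith
    have hnu : n * u ≤ 1 := by
      rw [not_le, lt_div_iff₀ hn] at hfar; linarith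
    calc |n * u * (gFun R0 f L t u + δ) - δ| ≤ n * u * |gFun R0 f L t u + δ| + δ := by
          simpa [abs_mul, abs_of_nonneg hδ, abs_of_nonneg hu]
            using abs_sub (n * u * (gFun R0 f L t u + δ)) δ
      _ ≤ 1 * (|gFun R0 f L t u| + δ) + δ := by
          gcongr
          simpa [abs_of_nonneg hδ] using abs_add_le (gFun R0 f L t u) δ
      _ ≤ A + 2 * δ + B * u := by linarith
  · rw [le_antisymm (not_lt.1 hpos) hu, mul_zero, zero_sub, abs_neg, abs_of_nonneg hδ]
    linarith

noncomputable def stiffness (n : ℕ) (u : ℝ) : ℝ := if u ≤ 0 then n else 1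

noncomputable def potential (n : ℕ) (u : ℝ) : ℝ := stiffness n u * u ^ 2

theorem potential_of_nonpos (n : ℕ) {u : ℝ} (hu : u ≤ 0) : potential n u = n * u ^ 2 := by
  simp [potential, stiffness, hu]

theorem potential_of_nonneg (n : ℕ) {u : ℝ} (hu : 0 ≤ u) : potential n u = u ^ 2 := by
  rcases hu.lt_or_eq with hu | rfl
  · simp [potential, stiffness, hu.not_ge]
  · simp [potential]

theorem hasDerivAt_potential (n : ℕ) (u : ℝ) :
    HasDerivAt (potential n) (2 * stiffness n u * u) u := by
  have hleft : ∀ u ≤ 0, HasDerivWithinAt (potential n) (2 * n * u) (Iic 0) u := fun u hu =>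
    ((hasDerivAt_pow 2 u).const_mul (n : ℝ)).hasDerivWithinAt.congr
      (fun v hv => potential_of_nonpos n hv) (potential_of_nonpos n hu) |>.congr_deriv (by ring)
  have hright : ∀ u ≥ 0, HasDerivWithinAt (potential n) (2 * u) (Ici 0) u := fun u hu =>
    (hasDerivAt_pow 2 u).hasDerivWithinAt.congr
      (fun v hv => potential_of_nonneg n hv) (potential_of_nonneg n hu) |>.congr_deriv (by ring)
  rcases lt_trichotomy u 0 with hu | rfl | hu
  · simpa [stiffness, hu.le, mul_assoc] using (hleft u hu.le).hasDerivAt (Iic_mem_nhds hu)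
  · rw [mul_zero, ← hasDerivWithinAt_univ, ← Iic_union_Ici (a := (0 : ℝ))]
    exact (hleft 0 le_rfl).union ((hright 0 le_rfl).congr_deriv (by simp))
      |>.congr_deriv (by simp)
  · simpa [stiffness, hu.not_ge] using (hright u hu.le).hasDerivAt (Ici_mem_nhds hu)

theorem energy_rate_le {n : ℕ} {δ A B u v g : ℝ} (hδ : 0 ≤ δ)
    (hneg : u ≤ 0 → g = n * u - δ) (hpos : 0 < u → |g| ≤ A + B * u) :
    2 * v * -g + 2 * stiffness n u * u * v
      ≤ (2 + (B + 1) ^ 2 + δ) * (v ^ 2 + potential n u) + (A ^ 2 + δ) := by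
  have hB₁ : 0 ≤ (B + 1) ^ 2 := sq_nonneg _
  rcases le_or_gt u 0 with hu | hu
  · rw [hneg hu, potential_of_nonpos n hu]
    simp only [stiffness, hu, if_true]
    have : 0 ≤ (n : ℝ) * u ^ 2 := by positivity
    nlinarith [sq_nonneg (v - 1)]
  · rw [potential_of_nonneg n hu.le]
    simp only [stiffness, hu.not_ge, if_false]
    have hvg : -(v * g) ≤ |v| * (A + B * u) := by
      calc -(v * g) ≤ |v * g| := neg_le_abs _
        _ = |v| * |g| := abs_mul v g
        _ ≤ |v| * (A + B * u) := mul_le_mul_of_nonneg_left (hpos hu) (abs_nonneg v)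
    have hv : |v| ^ 2 = v ^ 2 := sq_abs v
    nlinarith [sq_nonneg (|v| - A), sq_nonneg (|v| - (B + 1) * u), le_abs_self v,
      mul_nonneg hB₁ (sq_nonneg v), mul_nonneg hδ (sq_nonneg v), mul_nonneg hδ (sq_nonneg u),
      mul_nonneg hu.le (abs_nonneg v)]

theorem energy_le_gronwallBound {n : ℕ} {G : ℝ → ℝ → ℝ} {x x' : ℝ → ℝ} {a b C K E₀ : ℝ}
    (hsol : ∀ t ∈ Icc a b, HasDerivWithinAt x (x' t) (Icc a b) t ∧
      HasDerivWithinAt x' (-G t (x t)) (Icc a b) t)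
    (hrate : ∀ t u v, 2 * v * -G t u + 2 * stiffness n u * u * v ≤ C * (v ^ 2 + potential n u) + K)
    (hE₀ : x' a ^ 2 + potential n (x a) ≤ E₀) :
    ∀ t ∈ Icc a b, x' t ^ 2 + potential n (x t) ≤ gronwallBound E₀ C K (t - a) := by
  have hderiv : ∀ t ∈ Icc a b, HasDerivWithinAt (fun s => x' s ^ 2 + potential n (x s))
      (2 * x' t * -G t (x t) + 2 * stiffness n (x t) * x t * x' t) (Icc a b) t := fun t ht =>
    (((hsol t ht).2.pow 2).add
      ((hasDerivAt_potential n (x t)).comp_hasDerivWithinAt t (hsol t ht).1)).congr_deriv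
      (by push_cast; ring)
  refine le_gronwallBound_of_liminf_deriv_right_le
    (fun t ht => (hderiv t ht).continuousWithinAt) (fun t ht r hr => ?_) hE₀
    (fun t _ => hrate t (x t) (x' t))
  have hIci := (hderiv t (Ico_subset_Icc_self ht)).mono_of_mem_nhdsWithin
    (Icc_mem_nhdsGE_of_mem ht) |>.liminf_right_slope_le hr
  simpa only [slope_def_field, div_eq_inv_mul] using hIci

theorem sq_add_sq_le_of_mem_closure_Bball {χ : ℝ} {q : ℝ × ℝ} (hq : q ∈ closure (Bball χ)) :
    q.1 ^ 2 + q.2 ^ 2 ≤ χ ^ 2 := by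
  have hclosed : IsClosed {p : ℝ × ℝ | p.1 ^ 2 + p.2 ^ 2 ≤ χ ^ 2} :=
    isClosed_le (by fun_prop) continuous_const
  have hsub : Bball χ ⊆ {p : ℝ × ℝ | p.1 ^ 2 + p.2 ^ 2 ≤ χ ^ 2} := fun _ hp => by
    simp only [Bball, mem_ofPred_eq] at hp ⊢; exact hp.le
  exact closure_minimal hsub hclosed hq

theorem mem_XiSet_one_of_energy_le {n : ℕ} {δ E u v : ℝ} (hn : 1 ≤ n) (hδ : 0 ≤ δ)
    (hE : v ^ 2 + potential n u ≤ E) : (u, v) ∈ XiSet δ 1 (√E + δ + 1) := by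
  have huv : u ^ 2 + v ^ 2 ≤ E := by
    rcases le_total u 0 with hu | hu
    · rw [potential_of_nonpos n hu] at hE
      have : (1 : ℝ) ≤ n := by exact_mod_cast hn
      nlinarith [sq_nonneg u]
    · rw [potential_of_nonneg n hu] at hE; linarith
  have hE0 : 0 ≤ E := (by positivity : 0 ≤ u ^ 2 + v ^ 2).trans huv
  have hu : |u| ≤ √E := Real.abs_le_sqrt (by nlinarith [sq_nonneg v])
  have hsq : √E ^ 2 = E := Real.sq_sqrt hE0
  have hsqrt : 0 ≤ √E := Real.sqrt_nonneg E
  rcases le_total u 0 with hu0 | hu0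
  · refine Or.inl ⟨hu0, ?_⟩
    simp only [SigmaSet, mem_ofPred_eq, Nat.cast_one, one_mul]
    nlinarith [neg_abs_le u, mul_le_mul_of_nonneg_left hu hδ]
  · refine Or.inr ⟨hu0, ?_⟩
    simp only [Bball, mem_ofPred_eq]
    nlinarith

theorem statement5_general
    (R0 T L0 δ : ℝ) (hR0 : 0 < R0) (hT : 0 < T) (hδ : 0 < δ)
    (f : ℝ → ℝ → ℝ)
    (hf_cont : ContinuousOn (fun q : ℝ × ℝ => f q.1 q.2) (univ ×ˢ Ici R0))
    (hf_per : ∀ t ρ, f (t + T) ρ = f t ρ)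
    (μlo μhi : ℝ)
    (hlo : ∀ ε > (0 : ℝ), ∃ M : ℝ, R0 ≤ M ∧ ∀ t ρ : ℝ, M ≤ ρ → μlo - ε < f t ρ / ρ)
    (hhi : ∀ ε > (0 : ℝ), ∃ M : ℝ, R0 ≤ M ∧ ∀ t ρ : ℝ, M ≤ ρ → f t ρ / ρ < μhi + ε) :
    ∃ χbar : ℝ, 0 < χbar ∧ ∀ χ : ℝ, χbar ≤ χ →
      ∃ R : ℝ, 0 < R ∧ ∃ n₁ : ℕ, 0 < n₁ ∧
        ∀ n : ℕ, n₁ < n → ∀ L ∈ Icc (0 : ℝ) L0, ∀ x x' : ℝ → ℝ, ∀ t0 ∈ Icc (0 : ℝ) T,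
          (∀ t ∈ Icc t0 (t0 + T),
            HasDerivWithinAt x (x' t) (Icc t0 (t0 + T)) t ∧
            HasDerivWithinAt x' (-(gApprox R0 δ f n L t (x t))) (Icc t0 (t0 + T)) t) →
          (x t0, x' t0) ∈ closure (Bball χ) ∩ PiPlus →
          ∀ t ∈ Icc t0 (t0 + T), (x t, x' t) ∈ XiSet δ n₁ R := by
  obtain ⟨C₀, B, hf_lin⟩ :=
    exists_abs_le_add_mul hR0 hT hf_cont hf_per (hlo 1 one_pos) (hhi 1 one_pos)
  set A := L0 ^ 2 / R0 ^ 3 + C₀ + B * R0 + 2 * δ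
  set C := 2 + (B + 1) ^ 2 + δ
  set K := A ^ 2 + δ
  refine ⟨1, one_pos, fun χ _ => ?_⟩
  set E := gronwallBound (χ ^ 2) C K T
  refine ⟨√E + δ + 1, by positivity, 1, one_pos, ?_⟩
  intro n hn L hL x x' t0 _ hsol ⟨hclosure, hx0⟩ t ht
  have hrate (t u v : ℝ) : 2 * v * -gApprox R0 δ f n L t u + 2 * stiffness n u * u * v
      ≤ C * (v ^ 2 + potential n u) + K :=
    energy_rate_le hδ.le (gApprox_of_nonpos (by omega)) fun hu => abs_gApprox_le hδ.le
      (fun u hu => abs_gFun_le hR0 hf_lin ((abs_of_nonneg hL.1).trans_le hL.2) hu) hu.le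
  have hE₀ : x' t0 ^ 2 + potential n (x t0) ≤ χ ^ 2 := by
    rw [potential_of_nonneg n hx0]
    linarith [sq_add_sq_le_of_mem_closure_Bball hclosure]
  have hE : x' t ^ 2 + potential n (x t) ≤ E :=
    (energy_le_gronwallBound hsol hrate hE₀ t ht).trans
      (gronwallBound_mono (sq_nonneg χ) (by positivity) (by positivity) (by linarith [ht.2]))
  exact mem_XiSet_one_of_energy_le hn.le hδ.le hE

theorem statement5
    (R0 T L0 δ : ℝ) (hR0 : 0 < R0) (hT : 0 < T) (hL0 : 0 < L0) (hδ : 0 < δ)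
    (f : ℝ → ℝ → ℝ)
    (hf_cont : ContinuousOn (fun q : ℝ × ℝ => f q.1 q.2) (univ ×ˢ Ici R0))
    (hf_per : ∀ t ρ, f (t + T) ρ = f t ρ)
    (μlo μhi : ℝ) (N : ℕ) (hμ : μlo ≤ μhi)
    (h1 : ((N : ℝ) * π / T) ^ 2 < μlo)
    (h2 : μhi < (((N : ℝ) + 1) * π / T) ^ 2)
    (hlo : ∀ ε > (0 : ℝ), ∃ M : ℝ, R0 ≤ M ∧ ∀ t ρ : ℝ, M ≤ ρ → μlo - ε < f t ρ / ρ)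
    (hhi : ∀ ε > (0 : ℝ), ∃ M : ℝ, R0 ≤ M ∧ ∀ t ρ : ℝ, M ≤ ρ → f t ρ / ρ < μhi + ε) :
    ∃ χbar : ℝ, 0 < χbar ∧ ∀ χ : ℝ, χbar ≤ χ →
      ∃ R : ℝ, 0 < R ∧ ∃ n₁ : ℕ, 0 < n₁ ∧
        ∀ n : ℕ, n₁ < n → ∀ L ∈ Icc (0 : ℝ) L0, ∀ x x' : ℝ → ℝ, ∀ t0 ∈ Icc (0 : ℝ) T,
          (∀ t ∈ Icc t0 (t0 + T),
            HasDerivWithinAt x (x' t) (Icc t0 (t0 + T)) t ∧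
            HasDerivWithinAt x' (-(gApprox R0 δ f n L t (x t))) (Icc t0 (t0 + T)) t) →
          (x t0, x' t0) ∈ closure (Bball χ) ∩ PiPlus →
          ∀ t ∈ Icc t0 (t0 + T), (x t, x' t) ∈ XiSet δ n₁ R :=
  statement5_general R0 T L0 δ hR0 hT hδ f hf_cont hf_per μlo μhi hlo hhi
end

section
/- Let T > 0 and let h : ℝ × [0,∞) → ℝ be continuous and T-periodic in its first variable. Assume there exist constants 0 < μ̌ ≤ μ̂ such that μ̌ ≤ liminf_{x→+∞} h(t,x)/x and limsup_{x→+∞} h(t,x)/x ≤ μ̂, uniformly in t ∈ [0,T]. Then for every ε > 0 there exists χ_ε > 0 with the following property: if x is a solution of x'' + h(t,x) = 0 on an interval [t₂,t₃] with x(t₂) = x(t₃) = 0, x(t) > 0 for all t ∈ (t₂,t₃), and x(t)² + x'(t)² > χ_ε² for all t ∈ [t₂,t₃], then π/√μ̂ − ε < t₃ − t₂ < π/√μ̌ + ε. -/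
open Real Set

/-!
In the rescaled phase plane `(c x, x')` the angle `θ = arctan (x' / (c x))` satisfies
`θ' + c = c x (c² x - h(t, x)) / (c² x² + x'²)`. Where `x ≥ M` the force lies between `c₁² x` and
`c₂² x`, so there `θ` turns at a rate between `c₁` and `c₂`. Since `θ` stays in `(-π/2, π/2)` and
is within `c M / K` of `±π/2` where `x = M` and `|x'| > K`, the time spent in `{x ≥ M}` lies
between `π / c₂ - 2 M / K` and `π / c₁`. Outside the ball
of radius `M + K`, the orbit has `|x'| > K` wherever `x ≤ M`: so `x` has no critical point below
`M`, which makes `{x ≥ M}` a single interval, and the two passages between `0` and `M` take less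
than `M / K` each. Taking `c₁ < √μ̌`, `c₂ > √μ̂` close to them and `K ≫ M` gives the bounds.
-/

open Filter Topology

lemma exists_sq_lt_and_pi_div_lt {μ ε : ℝ} (hμ : 0 < μ) (hε : 0 < ε) :
    ∃ c, 0 < c ∧ c ^ 2 < μ ∧ π / c < π / √μ + ε := by
  have hs : 0 < √μ := sqrt_pos.2 hμ
  have hlim : Tendsto (π / ·) (𝓝[<] √μ) (𝓝 (π / √μ)) :=
    (continuousAt_const.div continuousAt_id hs.ne').tendsto.mono_left nhdsWithin_le_nhds
  obtain ⟨c, ⟨hc, hcμ⟩, hcπ⟩ :=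
    (Filter.Eventually.and (Ioo_mem_nhdsLT hs)
      (hlim.eventually (gt_mem_nhds (lt_add_of_pos_right _ hε)))).exists
  exact ⟨c, hc, (lt_sqrt hc.le).1 hcμ, hcπ⟩

lemma exists_lt_sq_and_pi_div_lt {μ ε : ℝ} (hμ : 0 < μ) (hε : 0 < ε) :
    ∃ c, 0 < c ∧ μ < c ^ 2 ∧ π / √μ - ε < π / c := by
  have hs : 0 < √μ := sqrt_pos.2 hμ
  have hlim : Tendsto (π / ·) (𝓝[>] √μ) (𝓝 (π / √μ)) :=
    (continuousAt_const.div continuousAt_id hs.ne').tendsto.mono_left nhdsWithin_le_nhds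
  obtain ⟨c, ⟨hcμ, -⟩, hcπ⟩ :=
    (Filter.Eventually.and (Ioo_mem_nhdsGT (lt_add_one √μ))
      (hlim.eventually (lt_mem_nhds (sub_lt_self _ hε)))).exists
  exact ⟨c, hs.trans hcμ, (sqrt_lt' (hs.trans hcμ)).1 hcμ, hcπ⟩

lemma mul_le_of_periodic_of_lt_div {h : ℝ → ℝ → ℝ} {T M m : ℝ} (hT : 0 < T) (hM : 0 < M)
    (hper : Function.Periodic h T) (hm : ∀ t ∈ Icc 0 T, ∀ v, M ≤ v → m < h t v / v)
    (t v : ℝ) (hv : M ≤ v) : m * v ≤ h t v := by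
  obtain ⟨s, hs, hts⟩ := hper.exists_mem_Ico₀ hT t
  rw [hts]
  exact ((lt_div_iff₀ (hM.trans_le hv)).1 (hm s (Ico_subset_Icc_self hs) v hv)).le

lemma le_mul_of_periodic_of_div_lt {h : ℝ → ℝ → ℝ} {T M m : ℝ} (hT : 0 < T) (hM : 0 < M)
    (hper : Function.Periodic h T) (hm : ∀ t ∈ Icc 0 T, ∀ v, M ≤ v → h t v / v < m)
    (t v : ℝ) (hv : M ≤ v) : h t v ≤ m * v := by
  obtain ⟨s, hs, hts⟩ := hper.exists_mem_Ico₀ hT t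
  rw [hts]
  exact ((div_lt_iff₀ (hM.trans_le hv)).1 (hm s (Ico_subset_Icc_self hs) v hv)).le

lemma lt_abs_of_sq_add_sq_gt {u v M K : ℝ} (hu : 0 ≤ u) (huM : u ≤ M) (hK : 0 ≤ K)
    (h : (M + K) ^ 2 < u ^ 2 + v ^ 2) : K < |v| :=
  lt_of_pow_lt_pow_left₀ 2 (abs_nonneg v) (by rw [sq_abs]; nlinarith)

lemma pi_div_two_sub_div_lt_arctan_div {v w K : ℝ} (hK : 0 < K) (hw : 0 < w) (hv : K < v) :
    π / 2 - w / K < arctan (v / w) := by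
  have hv₀ : 0 < v := hK.trans hv
  have hwv : 0 < w / v := div_pos hw hv₀
  have harctan : arctan (w / v) ≤ w / v :=
    (le_tan (arctan_nonneg.2 hwv.le) (arctan_lt_pi_div_two _)).trans_eq (tan_arctan _)
  have hlt : w / v < w / K := div_lt_div_of_pos_left hw hK hv
  rw [← inv_div w v, arctan_inv_of_pos hwv]
  linarith

section FirstOrder

variable {f f' : ℝ → ℝ} {a b K M : ℝ}

lemma exists_hasDerivWithinAt_eq_slope (hab : a < b)
    (hf : ∀ t ∈ Icc a b, HasDerivWithinAt f (f' t) (Icc a b) t) :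
    ∃ c ∈ Ioo a b, f' c = (f b - f a) / (b - a) :=
  exists_hasDerivAt_eq_slope f f' hab (fun t ht ↦ (hf t ht).continuousWithinAt)
    fun t ht ↦ (hf t (Ioo_subset_Icc_self ht)).hasDerivAt (Icc_mem_nhds ht.1 ht.2)

lemma mul_sub_lt_abs_sub_of_lt_abs_deriv (hab : a < b)
    (hf : ∀ t ∈ Icc a b, HasDerivWithinAt f (f' t) (Icc a b) t)
    (hfast : ∀ t ∈ Ioo a b, K < |f' t|) : K * (b - a) < |f b - f a| := by
  obtain ⟨c, hc, hslope⟩ := exists_hasDerivWithinAt_eq_slope hab hf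
  have hba : 0 < b - a := sub_pos.2 hab
  calc K * (b - a) < |f' c| * (b - a) := mul_lt_mul_of_pos_right (hfast c hc) hba
    _ = |f b - f a| := by rw [hslope, abs_div, abs_of_pos hba, div_mul_cancel₀ _ hba.ne']

lemma lt_deriv_of_lt_abs_deriv (hf : ∀ t ∈ Icc a b, HasDerivWithinAt f (f' t) (Icc a b) t)
    (hf' : ContinuousOn f' (Icc a b)) (hK : 0 ≤ K) (hfast : ∀ t ∈ Icc a b, K < |f' t|)
    (hlt : f a < f b) : ∀ t ∈ Icc a b, K < f' t := by
  intro t ht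
  have hab : a < b := (ht.1.trans ht.2).lt_of_ne (by rintro rfl; exact hlt.false)
  obtain ⟨c, hc, hslope⟩ := exists_hasDerivWithinAt_eq_slope hab hf
  have hc_pos : 0 < f' c := hslope ▸ div_pos (sub_pos.2 hlt) (sub_pos.2 hab)
  refine (lt_abs.1 (hfast t ht)).resolve_right fun hneg ↦ ?_
  obtain ⟨r, hr, hr₀⟩ := isPreconnected_Icc.intermediate_value ht (Ioo_subset_Icc_self hc) hf'
    ⟨by linarith, hc_pos.le⟩
  have := hfast r hr
  rw [hr₀, abs_zero] at this
  linarith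

lemma deriv_lt_neg_of_lt_abs_deriv (hf : ∀ t ∈ Icc a b, HasDerivWithinAt f (f' t) (Icc a b) t)
    (hf' : ContinuousOn f' (Icc a b)) (hK : 0 ≤ K) (hfast : ∀ t ∈ Icc a b, K < |f' t|)
    (hlt : f b < f a) : ∀ t ∈ Icc a b, f' t < -K := fun t ht ↦
  lt_neg.1 <| lt_deriv_of_lt_abs_deriv (f := -f) (fun t ht ↦ (hf t ht).neg) hf'.neg hK
    (fun t ht ↦ by simpa using hfast t ht) (neg_lt_neg hlt) t ht

lemma exists_first_hit (hf : ContinuousOn f (Icc a b)) (ha : f a < M)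
    (hM : ∃ t ∈ Icc a b, M ≤ f t) : ∃ s ∈ Ioc a b, f s = M ∧ ∀ t ∈ Ico a s, f t < M := by
  set S := Icc a b ∩ f ⁻¹' Ici M
  have hS : IsClosed S := hf.preimage_isClosed_of_isClosed isClosed_Icc isClosed_Ici
  have hbdd : BddBelow S := bddBelow_Icc.mono inter_subset_left
  obtain ⟨⟨has, hsb⟩, hMs⟩ := hS.csInf_mem hM hbdd
  have hbefore : ∀ t ∈ Ico a (sInf S), f t < M := fun t ht ↦
    not_le.1 fun hMt ↦ (csInf_le hbdd ⟨⟨ht.1, ht.2.le.trans hsb⟩, hMt⟩).not_gt ht.2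
  obtain ⟨r, hr, hfr⟩ := intermediate_value_Icc has (hf.mono (Icc_subset_Icc_right hsb))
    ⟨ha.le, hMs⟩
  rw [hr.2.eq_of_not_lt fun hlt ↦ (hbefore r ⟨hr.1, hlt⟩).ne hfr] at hfr
  exact ⟨sInf S, ⟨has.lt_of_ne fun h ↦ (h ▸ hfr).not_lt ha, hsb⟩, hfr, hbefore⟩

lemma exists_last_hit (hf : ContinuousOn f (Icc a b)) (hb : f b < M)
    (hM : ∃ t ∈ Icc a b, M ≤ f t) : ∃ s ∈ Ico a b, f s = M ∧ ∀ t ∈ Ioc s b, f t < M := by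
  set S := Icc a b ∩ f ⁻¹' Ici M
  have hS : IsClosed S := hf.preimage_isClosed_of_isClosed isClosed_Icc isClosed_Ici
  have hbdd : BddAbove S := bddAbove_Icc.mono inter_subset_left
  obtain ⟨⟨has, hsb⟩, hMs⟩ := hS.csSup_mem hM hbdd
  have hafter : ∀ t ∈ Ioc (sSup S) b, f t < M := fun t ht ↦
    not_le.1 fun hMt ↦ (le_csSup hbdd ⟨⟨has.trans ht.1.le, ht.2⟩, hMt⟩).not_gt ht.1
  obtain ⟨r, hr, hfr⟩ := intermediate_value_Icc' hsb (hf.mono (Icc_subset_Icc_left has))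
    ⟨hb.le, hMs⟩
  rw [← hr.1.eq_of_not_lt fun hlt ↦ (hafter r ⟨hlt, hr.2⟩).ne hfr] at hfr
  exact ⟨sSup S, ⟨has, hsb.lt_of_ne fun h ↦ (h ▸ hfr).not_lt hb⟩, hfr, hafter⟩

lemma le_of_le_endpoints_of_deriv_ne_zero (hf : ContinuousOn f (Icc a b))
    (hf' : ∀ t ∈ Ioo a b, HasDerivAt f (f' t) t) (ha : M ≤ f a) (hb : M ≤ f b)
    (hcrit : ∀ t ∈ Ioo a b, f t < M → f' t ≠ 0) : ∀ t ∈ Icc a b, M ≤ f t := by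
  intro t ht
  by_contra! hlt
  obtain ⟨m, hm, hmin⟩ := isCompact_Icc.exists_isMinOn ⟨t, ht⟩ hf
  have hfm : f m < M := (isMinOn_iff.1 hmin t ht).trans_lt hlt
  have hm' : m ∈ Ioo a b :=
    ⟨hm.1.lt_of_ne (by rintro rfl; exact hfm.not_ge ha),
      hm.2.lt_of_ne (by rintro rfl; exact hfm.not_ge hb)⟩
  exact hcrit m hm' hfm
    ((hmin.isLocalMin (Icc_mem_nhds hm'.1 hm'.2)).hasDerivAt_eq_zero (hf' m hm'))

lemma exists_superlevel_Icc_of_deriv_ne_zero (hab : a < b) (hf : ContinuousOn f (Icc a b))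
    (hf' : ∀ t ∈ Ioo a b, HasDerivAt f (f' t) t) (hfab : f a = f b) (ha : f a < M)
    (hcrit : ∀ t ∈ Ioo a b, f t < M → f' t ≠ 0) :
    ∃ s₂ s₃, a < s₂ ∧ s₂ ≤ s₃ ∧ s₃ < b ∧ f s₂ = M ∧ f s₃ = M ∧ (∀ t ∈ Icc s₂ s₃, M ≤ f t) ∧
      (∀ t ∈ Icc a s₂, f t ≤ M) ∧ ∀ t ∈ Icc s₃ b, f t ≤ M := by
  have hbig : ∃ t ∈ Icc a b, M ≤ f t := by
    by_contra! hsmall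
    obtain ⟨c, hc, hc₀⟩ := exists_hasDerivAt_eq_zero hab hf hfab hf'
    exact hcrit c hc (hsmall c (Ioo_subset_Icc_self hc)) hc₀
  obtain ⟨s₂, hs₂, hfs₂, hbefore⟩ := exists_first_hit hf ha hbig
  obtain ⟨s₃, hs₃, hfs₃, hafter⟩ := exists_last_hit hf (hfab ▸ ha) hbig
  have hs₂₃ : s₂ ≤ s₃ := not_lt.1 fun h ↦ (hbefore s₃ ⟨hs₃.1, h⟩).ne hfs₃
  refine ⟨s₂, s₃, hs₂.1, hs₂₃, hs₃.2, hfs₂, hfs₃, ?_, ?_, ?_⟩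
  · exact le_of_le_endpoints_of_deriv_ne_zero (hf.mono (Icc_subset_Icc hs₂.1.le hs₃.2.le))
      (fun t ht ↦ hf' t ⟨hs₂.1.trans ht.1, ht.2.trans hs₃.2⟩) hfs₂.ge hfs₃.ge
      fun t ht ↦ hcrit t ⟨hs₂.1.trans ht.1, ht.2.trans hs₃.2⟩
  · intro t ht
    rcases ht.2.lt_or_eq with h | rfl
    exacts [(hbefore t ⟨ht.1, h⟩).le, hfs₂.le]
  · intro t ht
    rcases ht.1.lt_or_eq with h | rfl
    exacts [(hafter t ⟨h, ht.2⟩).le, hfs₃.le]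

end FirstOrder

def SolvesOn (h : ℝ → ℝ → ℝ) (x x' : ℝ → ℝ) (a b : ℝ) : Prop :=
  ∀ t ∈ Icc a b,
    HasDerivWithinAt x (x' t) (Icc a b) t ∧ HasDerivWithinAt x' (-h t (x t)) (Icc a b) t

/-- The angle of `(c x, x')` in the rescaled phase plane, meaningful while `x > 0`. -/
noncomputable def phaseAngle (c : ℝ) (x x' : ℝ → ℝ) (t : ℝ) : ℝ :=
  arctan (x' t / (c * x t))

lemma hasDerivWithinAt_phaseAngle_add {x x' : ℝ → ℝ} {s : Set ℝ} {c t A : ℝ} (hc : 0 < c)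
    (hx : 0 < x t) (H : HasDerivWithinAt x (x' t) s t) (H' : HasDerivWithinAt x' (-A) s t) :
    HasDerivWithinAt (fun τ ↦ phaseAngle c x x' τ + c * τ)
      (c * x t * (c ^ 2 * x t - A) / (c ^ 2 * x t ^ 2 + x' t ^ 2)) s t := by
  have hcx : c * x t ≠ 0 := by positivity
  have hθ : HasDerivWithinAt (fun τ ↦ phaseAngle c x x' τ + c * τ)
      (1 / (1 + (x' t / (c * x t)) ^ 2) * ((-A * (c * x t) - x' t * (c * x' t)) / (c * x t) ^ 2)
        + c * 1) s t :=
    (H'.div (H.const_mul c) hcx).arctan.add ((hasDerivWithinAt_id t s).const_mul c)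
  refine hθ.congr_deriv ?_
  field_simp
  ring

namespace SolvesOn

variable {h : ℝ → ℝ → ℝ} {x x' : ℝ → ℝ} {a b c : ℝ}

lemma mono (hs : SolvesOn h x x' a b) {p q : ℝ} (hp : a ≤ p) (hq : q ≤ b) :
    SolvesOn h x x' p q := fun t ht ↦
  ⟨(hs t (Icc_subset_Icc hp hq ht)).1.mono (Icc_subset_Icc hp hq),
    (hs t (Icc_subset_Icc hp hq ht)).2.mono (Icc_subset_Icc hp hq)⟩

lemma continuousOn (hs : SolvesOn h x x' a b) : ContinuousOn x (Icc a b) :=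
  fun t ht ↦ (hs t ht).1.continuousWithinAt

lemma continuousOn_deriv (hs : SolvesOn h x x' a b) : ContinuousOn x' (Icc a b) :=
  fun t ht ↦ (hs t ht).2.continuousWithinAt

lemma hasDerivAt (hs : SolvesOn h x x' a b) {t : ℝ} (ht : t ∈ Ioo a b) :
    HasDerivAt x (x' t) t :=
  (hs t (Ioo_subset_Icc_self ht)).1.hasDerivAt (Icc_mem_nhds ht.1 ht.2)

lemma monotoneOn_phaseAngle_add (hs : SolvesOn h x x' a b) (hc : 0 < c)
    (hpos : ∀ t ∈ Icc a b, 0 < x t) (hh : ∀ t ∈ Icc a b, h t (x t) ≤ c ^ 2 * x t) :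
    MonotoneOn (fun t ↦ phaseAngle c x x' t + c * t) (Icc a b) := by
  have hd t (ht : t ∈ Icc a b) :=
    hasDerivWithinAt_phaseAngle_add hc (hpos t ht) (hs t ht).1 (hs t ht).2
  refine monotoneOn_of_hasDerivWithinAt_nonneg (convex_Icc a b) (f' := fun t ↦
      c * x t * (c ^ 2 * x t - h t (x t)) / (c ^ 2 * x t ^ 2 + x' t ^ 2))
    (fun t ht ↦ (hd t ht).continuousWithinAt) (fun t ht ↦ ?_) fun t ht ↦ ?_
  · rw [interior_Icc] at ht ⊢
    exact (hd t (Ioo_subset_Icc_self ht)).mono Ioo_subset_Icc_self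
  · rw [interior_Icc] at ht
    have := hpos t (Ioo_subset_Icc_self ht)
    have := hh t (Ioo_subset_Icc_self ht)
    exact div_nonneg (mul_nonneg (by positivity) (by linarith)) (by positivity)

lemma antitoneOn_phaseAngle_add (hs : SolvesOn h x x' a b) (hc : 0 < c)
    (hpos : ∀ t ∈ Icc a b, 0 < x t) (hh : ∀ t ∈ Icc a b, c ^ 2 * x t ≤ h t (x t)) :
    AntitoneOn (fun t ↦ phaseAngle c x x' t + c * t) (Icc a b) := by
  have hd t (ht : t ∈ Icc a b) :=
    hasDerivWithinAt_phaseAngle_add hc (hpos t ht) (hs t ht).1 (hs t ht).2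
  refine antitoneOn_of_hasDerivWithinAt_nonpos (convex_Icc a b) (f' := fun t ↦
      c * x t * (c ^ 2 * x t - h t (x t)) / (c ^ 2 * x t ^ 2 + x' t ^ 2))
    (fun t ht ↦ (hd t ht).continuousWithinAt) (fun t ht ↦ ?_) fun t ht ↦ ?_
  · rw [interior_Icc] at ht ⊢
    exact (hd t (Ioo_subset_Icc_self ht)).mono Ioo_subset_Icc_self
  · rw [interior_Icc] at ht
    have := hpos t (Ioo_subset_Icc_self ht)
    have := hh t (Ioo_subset_Icc_self ht)
    exact div_nonpos_of_nonpos_of_nonneg (mul_nonpos_of_nonneg_of_nonpos (by positivity)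
      (by linarith)) (by positivity)

lemma sub_lt_pi_div (hs : SolvesOn h x x' a b) (hc : 0 < c) (hab : a ≤ b)
    (hpos : ∀ t ∈ Icc a b, 0 < x t) (hh : ∀ t ∈ Icc a b, c ^ 2 * x t ≤ h t (x t)) :
    b - a < π / c := by
  have hturn := hs.antitoneOn_phaseAngle_add hc hpos hh ⟨le_rfl, hab⟩ ⟨hab, le_rfl⟩ hab
  simp only [phaseAngle] at hturn
  rw [lt_div_iff₀ hc]
  linarith [arctan_lt_pi_div_two (x' a / (c * x a)), neg_pi_div_two_lt_arctan (x' b / (c * x b))]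

lemma pi_div_sub_lt (hs : SolvesOn h x x' a b) (hc : 0 < c) (hab : a ≤ b)
    (hpos : ∀ t ∈ Icc a b, 0 < x t) (hh : ∀ t ∈ Icc a b, h t (x t) ≤ c ^ 2 * x t)
    {M K : ℝ} (hK : 0 < K) (ha : x a = M) (hb : x b = M) (hxa : K < x' a) (hxb : x' b < -K) :
    π / c - 2 * M / K < b - a := by
  have hM : 0 < c * M := mul_pos hc (ha ▸ hpos a ⟨le_rfl, hab⟩)
  have hturn := hs.monotoneOn_phaseAngle_add hc hpos hh ⟨le_rfl, hab⟩ ⟨hab, le_rfl⟩ hab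
  simp only [phaseAngle, ha, hb] at hturn
  have hθa := pi_div_two_sub_div_lt_arctan_div hK hM hxa
  have hθb := pi_div_two_sub_div_lt_arctan_div hK hM (lt_neg.1 hxb)
  rw [neg_div, arctan_neg] at hθb
  rw [sub_lt_iff_lt_add, div_lt_iff₀ hc]
  have : c * M / K * 2 = 2 * M / K * c := by ring
  linarith

lemma exists_crossing_times (hs : SolvesOn h x x' a b) (hab : a < b) {M K : ℝ} (hM : 0 < M)
    (hK : 0 < K) (ha : x a = 0) (hb : x b = 0) (hpos : ∀ t ∈ Ioo a b, 0 < x t)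
    (hfar : ∀ t ∈ Icc a b, (M + K) ^ 2 < x t ^ 2 + x' t ^ 2) :
    ∃ s₂ s₃, s₂ ≤ s₃ ∧ SolvesOn h x x' s₂ s₃ ∧ (∀ t ∈ Icc s₂ s₃, M ≤ x t) ∧
      x s₂ = M ∧ x s₃ = M ∧ K < x' s₂ ∧ x' s₃ < -K ∧
      s₃ - s₂ ≤ b - a ∧ b - a < s₃ - s₂ + 2 * M / K := by
  have hnonneg : ∀ t ∈ Icc a b, 0 ≤ x t := by
    rintro t ⟨hat, htb⟩
    rcases hat.lt_or_eq with hat | rfl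
    · rcases htb.lt_or_eq with htb | rfl
      exacts [(hpos t ⟨hat, htb⟩).le, hb.ge]
    · exact ha.ge
  have hfast : ∀ t ∈ Icc a b, x t ≤ M → K < |x' t| := fun t ht hxt ↦
    lt_abs_of_sq_add_sq_gt (hnonneg t ht) hxt hK.le (hfar t ht)
  obtain ⟨s₂, s₃, has₂, hs₂₃, hs₃b, hxs₂, hxs₃, hmid, hleft, hright⟩ :=
    exists_superlevel_Icc_of_deriv_ne_zero hab hs.continuousOn (fun t ↦ hs.hasDerivAt)
      (ha.trans hb.symm) (ha ▸ hM) fun t ht hxt hx'₀ ↦ by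
        simpa [hx'₀] using hK.trans (hfast t (Ioo_subset_Icc_self ht) hxt.le)
  have hL := hs.mono le_rfl (hs₂₃.trans hs₃b.le)
  have hR := hs.mono (has₂.le.trans hs₂₃) le_rfl
  have hfastL : ∀ t ∈ Icc a s₂, K < |x' t| := fun t ht ↦
    hfast t ⟨ht.1, ht.2.trans (hs₂₃.trans hs₃b.le)⟩ (hleft t ht)
  have hfastR : ∀ t ∈ Icc s₃ b, K < |x' t| := fun t ht ↦
    hfast t ⟨has₂.le.trans (hs₂₃.trans ht.1), ht.2⟩ (hright t ht)
  have htimeL := mul_sub_lt_abs_sub_of_lt_abs_deriv has₂ (fun t ht ↦ (hL t ht).1)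
    fun t ht ↦ hfastL t (Ioo_subset_Icc_self ht)
  have htimeR := mul_sub_lt_abs_sub_of_lt_abs_deriv hs₃b (fun t ht ↦ (hR t ht).1)
    fun t ht ↦ hfastR t (Ioo_subset_Icc_self ht)
  rw [hxs₂, ha, sub_zero, abs_of_pos hM, ← lt_div_iff₀' hK] at htimeL
  rw [hxs₃, hb, zero_sub, abs_neg, abs_of_pos hM, ← lt_div_iff₀' hK] at htimeR
  refine ⟨s₂, s₃, hs₂₃, hs.mono has₂.le hs₃b.le, hmid, hxs₂, hxs₃, ?_, ?_, by linarith, ?_⟩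
  · exact lt_deriv_of_lt_abs_deriv (fun t ht ↦ (hL t ht).1) hL.continuousOn_deriv hK.le hfastL
      (by rw [ha, hxs₂]; exact hM) s₂ ⟨has₂.le, le_rfl⟩
  · exact deriv_lt_neg_of_lt_abs_deriv (fun t ht ↦ (hR t ht).1) hR.continuousOn_deriv hK.le
      hfastR (by rw [hb, hxs₃]; exact hM) s₃ ⟨le_rfl, hs₃b.le⟩
  · rw [mul_div_assoc]
    linarith

theorem half_rotation_time_bounds (hs : SolvesOn h x x' a b) (hab : a < b) {c₁ c₂ M K : ℝ}
    (hc₁ : 0 < c₁) (hc₂ : 0 < c₂) (hM : 0 < M) (hK : 0 < K)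
    (hlo : ∀ t v, M ≤ v → c₁ ^ 2 * v ≤ h t v) (hhi : ∀ t v, M ≤ v → h t v ≤ c₂ ^ 2 * v)
    (ha : x a = 0) (hb : x b = 0) (hpos : ∀ t ∈ Ioo a b, 0 < x t)
    (hfar : ∀ t ∈ Icc a b, (M + K) ^ 2 < x t ^ 2 + x' t ^ 2) :
    π / c₂ - 2 * M / K < b - a ∧ b - a < π / c₁ + 2 * M / K := by
  obtain ⟨s₂, s₃, hs₂₃, hsmid, hmid, hxs₂, hxs₃, hx's₂, hx's₃, hshort, hlong⟩ :=
    hs.exists_crossing_times hab hM hK ha hb hpos hfar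
  have hposmid : ∀ t ∈ Icc s₂ s₃, 0 < x t := fun t ht ↦ hM.trans_le (hmid t ht)
  have hupper := hsmid.sub_lt_pi_div hc₁ hs₂₃ hposmid fun t ht ↦ hlo t _ (hmid t ht)
  have hlower := hsmid.pi_div_sub_lt hc₂ hs₂₃ hposmid (fun t ht ↦ hhi t _ (hmid t ht)) hK
    hxs₂ hxs₃ hx's₂ hx's₃
  constructor <;> linarith

end SolvesOn

theorem statement9_general
    (T : ℝ) (hT : 0 < T)
    (h : ℝ → ℝ → ℝ)
    (hh_per : ∀ t x, h (t + T) x = h t x)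
    (μlo μhi : ℝ) (hμ0 : 0 < μlo) (hμ : μlo ≤ μhi)
    (hlo : ∀ ε > (0 : ℝ), ∃ M : ℝ, 0 < M ∧ ∀ t ∈ Icc (0 : ℝ) T, ∀ x : ℝ, M ≤ x →
      μlo - ε < h t x / x)
    (hhi : ∀ ε > (0 : ℝ), ∃ M : ℝ, 0 < M ∧ ∀ t ∈ Icc (0 : ℝ) T, ∀ x : ℝ, M ≤ x →
      h t x / x < μhi + ε) :
    ∀ ε > (0 : ℝ), ∃ χ : ℝ, 0 < χ ∧
      ∀ x x' : ℝ → ℝ, ∀ t₂ t₃ : ℝ, t₂ < t₃ →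
        (∀ t ∈ Icc t₂ t₃,
          HasDerivWithinAt x (x' t) (Icc t₂ t₃) t ∧
          HasDerivWithinAt x' (-(h t (x t))) (Icc t₂ t₃) t) →
        x t₂ = 0 → x t₃ = 0 →
        (∀ t ∈ Ioo t₂ t₃, 0 < x t) →
        (∀ t ∈ Icc t₂ t₃, χ ^ 2 < (x t) ^ 2 + (x' t) ^ 2) →
        π / Real.sqrt μhi - ε < t₃ - t₂ ∧ t₃ - t₂ < π / Real.sqrt μlo + ε := by
  intro ε hε
  obtain ⟨c₁, hc₁, hc₁μ, hπ₁⟩ := exists_sq_lt_and_pi_div_lt hμ0 (half_pos hε)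
  obtain ⟨c₂, hc₂, hc₂μ, hπ₂⟩ := exists_lt_sq_and_pi_div_lt (hμ0.trans_le hμ) (half_pos hε)
  obtain ⟨M₁, hM₁, hlo₁⟩ := hlo _ (sub_pos.2 hc₁μ)
  obtain ⟨M₂, -, hhi₂⟩ := hhi _ (sub_pos.2 hc₂μ)
  set M := max M₁ M₂
  have hM : 0 < M := hM₁.trans_le (le_max_left _ _)
  have hper : Function.Periodic h T := fun t ↦ funext (hh_per t)
  have hlow := mul_le_of_periodic_of_lt_div hT hM hper fun t ht v hv ↦ by
    simpa using hlo₁ t ht v ((le_max_left _ _).trans hv)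
  have hhigh := le_mul_of_periodic_of_div_lt hT hM hper fun t ht v hv ↦ by
    simpa using hhi₂ t ht v ((le_max_right _ _).trans hv)
  set K := 4 * M / ε
  have hK : 0 < K := by positivity
  refine ⟨M + K, by positivity, fun x x' t₂ t₃ hlt hs hx₂ hx₃ hpos hfar ↦ ?_⟩
  have hMK : 2 * M / K = ε / 2 := by simp only [K]; field_simp; ring
  obtain ⟨hlower, hupper⟩ :=
    SolvesOn.half_rotation_time_bounds hs hlt hc₁ hc₂ hM hK hlow hhigh hx₂ hx₃ hpos hfar
  rw [hMK] at hlower hupper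
  constructor <;> linarith

theorem statement9
    (T : ℝ) (hT : 0 < T)
    (h : ℝ → ℝ → ℝ)
    (hh_cont : ContinuousOn (fun q : ℝ × ℝ => h q.1 q.2) (univ ×ˢ Ici (0 : ℝ)))
    (hh_per : ∀ t x, h (t + T) x = h t x)
    (μlo μhi : ℝ) (hμ0 : 0 < μlo) (hμ : μlo ≤ μhi)
    (hlo : ∀ ε > (0 : ℝ), ∃ M : ℝ, 0 < M ∧ ∀ t ∈ Icc (0 : ℝ) T, ∀ x : ℝ, M ≤ x →
      μlo - ε < h t x / x)
    (hhi : ∀ ε > (0 : ℝ), ∃ M : ℝ, 0 < M ∧ ∀ t ∈ Icc (0 : ℝ) T, ∀ x : ℝ, M ≤ x →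
      h t x / x < μhi + ε) :
    ∀ ε > (0 : ℝ), ∃ χ : ℝ, 0 < χ ∧
      ∀ x x' : ℝ → ℝ, ∀ t₂ t₃ : ℝ, t₂ < t₃ →
        (∀ t ∈ Icc t₂ t₃,
          HasDerivWithinAt x (x' t) (Icc t₂ t₃) t ∧
          HasDerivWithinAt x' (-(h t (x t))) (Icc t₂ t₃) t) →
        x t₂ = 0 → x t₃ = 0 →
        (∀ t ∈ Ioo t₂ t₃, 0 < x t) →
        (∀ t ∈ Icc t₂ t₃, χ ^ 2 < (x t) ^ 2 + (x' t) ^ 2) →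
        π / Real.sqrt μhi - ε < t₃ - t₂ ∧ t₃ - t₂ < π / Real.sqrt μlo + ε :=
  statement9_general T hT h hh_per μlo μhi hμ0 hμ hlo hhi
end

section
/- Let T > 0 and let h : ℝ × [0,∞) → ℝ be continuous and T-periodic in its first variable. Assume there exist constants 0 < μ̌ ≤ μ̂ with μ̌ ≤ liminf_{x→+∞} h(t,x)/x and limsup_{x→+∞} h(t,x)/x ≤ μ̂ uniformly in t ∈ [0,T], and constants a, b > 0 with |h(t,x)| ≤ ax + b for all t and all x ≥ 0. Then there exist χ̄ > 0, θ₀ > 0 and l₀ > 0 such that for every solution x of x'' + h(t,x) = 0 and every time t at which x(t) ≥ 0 and x(t)² + x'(t)² > χ̄², writing the orbit in polar coordinates x(t) = ϱ(t)cos θ(t), x'(t) = ϱ(t)sin θ(t), one has −θ'(t) = (x'(t)² + x(t)·h(t,x(t)))/(x(t)² + x'(t)²) > θ₀ and |ϱ'(t)| = |x'(t)·(x(t) − h(t,x(t)))|/√(x(t)² + x'(t)²) < l₀·ϱ(t); consequently |dϱ/d(−θ)| < K·ϱ along the orbit, with K = l₀/θ₀. -/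
/-!
Both estimates are pointwise in the phase plane. Since `h(t, x) > (μ̌/2) x` for large `x`
(uniformly in `t`, by periodicity) and `|h(t, x)| ≤ a x + b`, one has `x h(t, x) ≥ (μ̌/2) x² - C`
for all `x ≥ 0`; hence `x'² + x h ≥ m ϱ² - C` with `m = min 1 (μ̌/2)`, which exceeds `m ϱ² / 2`
once `ϱ²` is large. The radial velocity is at most `|x'| ((1 + a) x + b) ≤ (1 + a) ϱ² / 2 + b ϱ`.
-/

open Real Set

/-- `-θ'` for the orbit through `(x, v)` when the restoring force is `y`. -/
noncomputable def angularSpeed (x v y : ℝ) : ℝ := (v ^ 2 + x * y) / (x ^ 2 + v ^ 2)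

/-- `|ϱ'|` for the orbit through `(x, v)` when the restoring force is `y`. -/
noncomputable def radialSpeed (x v y : ℝ) : ℝ := |v * (x - y)| / √(x ^ 2 + v ^ 2)

lemma exists_forall_mul_le_of_periodic {T : ℝ} (hT : 0 < T) {h : ℝ → ℝ → ℝ}
    (hh_per : ∀ t x, h (t + T) x = h t x) {μ μ' : ℝ}
    (hlo : ∀ ε > (0 : ℝ), ∃ M : ℝ, 0 < M ∧ ∀ t ∈ Icc (0 : ℝ) T, ∀ x : ℝ, M ≤ x →
      μ - ε < h t x / x)
    (hμ' : μ' < μ) :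
    ∃ M > 0, ∀ t x, M ≤ x → μ' * x ≤ h t x := by
  obtain ⟨M, hM, hbound⟩ := hlo (μ - μ') (sub_pos.2 hμ')
  refine ⟨M, hM, fun t x hx => ?_⟩
  obtain ⟨s, hs, hts⟩ := Function.Periodic.exists_mem_Ico₀ (f := (h · x)) (hh_per · x) hT t
  have hdiv := hbound s (Ico_subset_Icc_self hs) x hx
  rw [sub_sub_cancel, lt_div_iff₀ (hM.trans_le hx)] at hdiv
  exact hts ▸ hdiv.le

lemma sq_sub_le_mul_of_forall_ge {g : ℝ → ℝ} {μ a b M x : ℝ} (hμ : 0 ≤ μ) (ha : 0 ≤ a)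
    (hb : 0 ≤ b) (hM : 0 ≤ M) (hlarge : ∀ x, M ≤ x → μ * x ≤ g x)
    (hgrowth : ∀ x, 0 ≤ x → |g x| ≤ a * x + b) (hx : 0 ≤ x) :
    μ * x ^ 2 - ((a + μ) * M ^ 2 + b * M) ≤ x * g x := by
  rcases le_total M x with hMx | hxM
  · have := mul_le_mul_of_nonneg_left (hlarge x hMx) hx
    nlinarith
  · have hg : -(a * x + b) ≤ g x := neg_le_of_abs_le (hgrowth x hx)
    have hxM2 : x ^ 2 ≤ M ^ 2 := pow_le_pow_left₀ hx hxM 2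
    nlinarith [mul_le_mul_of_nonneg_left hg hx]

lemma half_min_lt_angularSpeed {μ C x v y : ℝ} (hμ : 0 < μ) (hC : 0 ≤ C)
    (hxy : μ * x ^ 2 - C ≤ x * y) (hS : 2 * C / min 1 μ < x ^ 2 + v ^ 2) :
    min 1 μ / 2 < angularSpeed x v y := by
  set m := min 1 μ
  have hm : 0 < m := lt_min one_pos hμ
  have hmx : m * x ^ 2 ≤ μ * x ^ 2 := by gcongr; exact min_le_right _ _
  have hmv : m * v ^ 2 ≤ v ^ 2 := mul_le_of_le_one_left (sq_nonneg v) (min_le_left _ _)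
  rw [div_lt_iff₀ hm] at hS
  have hSpos : 0 < x ^ 2 + v ^ 2 := by nlinarith
  rw [angularSpeed, lt_div_iff₀ hSpos]
  nlinarith

lemma radialSpeed_lt {a b x v y : ℝ} (ha : 0 ≤ a) (hb : 0 < b) (hx : 0 ≤ x)
    (hy : |y| ≤ a * x + b) (hS : 1 < x ^ 2 + v ^ 2) :
    radialSpeed x v y < ((1 + a) / 2 + b) * √(x ^ 2 + v ^ 2) := by
  set ρ := √(x ^ 2 + v ^ 2)
  have hρ1 : 1 < ρ := by rw [← sqrt_one]; exact sqrt_lt_sqrt zero_le_one hS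
  have hρsq : ρ ^ 2 = x ^ 2 + v ^ 2 := sq_sqrt (by positivity)
  have hv : |v| ≤ ρ := by
    rw [← sqrt_sq_eq_abs]; exact sqrt_le_sqrt (le_add_of_nonneg_left (sq_nonneg x))
  have hvx : |v| * x ≤ ρ ^ 2 / 2 := by nlinarith [sq_nonneg (|v| - x), sq_abs v]
  have hxy : |x - y| ≤ (1 + a) * x + b := by
    calc |x - y| ≤ |x| + |y| := abs_sub _ _
      _ ≤ (1 + a) * x + b := by rw [abs_of_nonneg hx]; linarith
  rw [radialSpeed, div_lt_iff₀ (by linarith), mul_assoc, ← sq]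
  calc |v * (x - y)| ≤ |v| * ((1 + a) * x + b) := by
        rw [abs_mul]; exact mul_le_mul_of_nonneg_left hxy (abs_nonneg v)
    _ = (1 + a) * (|v| * x) + b * |v| := by ring
    _ ≤ (1 + a) * (ρ ^ 2 / 2) + b * ρ := by gcongr
    _ < ((1 + a) / 2 + b) * ρ ^ 2 := by
        have : b * ρ < b * ρ ^ 2 := mul_lt_mul_of_pos_left (by nlinarith) hb
        linarith

lemma lt_div_mul_mul_of_lt_mul {r l θ ω ρ : ℝ} (hθ : 0 < θ) (hθω : θ < ω) (hl : 0 < l)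
    (hρ : 0 < ρ) (hr : r < l * ρ) : r < l / θ * ω * ρ := by
  have : l < l / θ * ω := by
    rw [div_mul_eq_mul_div, lt_div_iff₀ hθ]
    exact mul_lt_mul_of_pos_left hθω hl
  exact hr.trans (mul_lt_mul_of_pos_right this hρ)

theorem statement10_general
    (T : ℝ) (hT : 0 < T)
    (h : ℝ → ℝ → ℝ)
    (hh_per : ∀ t x, h (t + T) x = h t x)
    (μlo : ℝ) (hμ0 : 0 < μlo)
    (hlo : ∀ ε > (0 : ℝ), ∃ M : ℝ, 0 < M ∧ ∀ t ∈ Icc (0 : ℝ) T, ∀ x : ℝ, M ≤ x →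
      μlo - ε < h t x / x)
    (a b : ℝ) (ha : 0 < a) (hb : 0 < b)
    (hgrowth : ∀ t : ℝ, ∀ x : ℝ, 0 ≤ x → |h t x| ≤ a * x + b) :
    ∃ χbar θ₀ l₀ : ℝ, 0 < χbar ∧ 0 < θ₀ ∧ 0 < l₀ ∧
      ∀ x x' : ℝ → ℝ,
        (∀ t : ℝ, HasDerivAt x (x' t) t ∧ HasDerivAt x' (-(h t (x t))) t) →
        ∀ t : ℝ, 0 ≤ x t → χbar ^ 2 < (x t) ^ 2 + (x' t) ^ 2 →
          -- the angular velocity −θ' is bounded from below by θ₀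
          θ₀ < ((x' t) ^ 2 + x t * h t (x t)) / ((x t) ^ 2 + (x' t) ^ 2) ∧
          -- the radial velocity |ϱ'| is bounded by l₀ ϱ
          |x' t * (x t - h t (x t))| / Real.sqrt ((x t) ^ 2 + (x' t) ^ 2) <
            l₀ * Real.sqrt ((x t) ^ 2 + (x' t) ^ 2) ∧
          -- consequently |dϱ/d(−θ)| < K ϱ with K = l₀/θ₀
          |x' t * (x t - h t (x t))| / Real.sqrt ((x t) ^ 2 + (x' t) ^ 2) <
            (l₀ / θ₀) * (((x' t) ^ 2 + x t * h t (x t)) / ((x t) ^ 2 + (x' t) ^ 2)) *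
              Real.sqrt ((x t) ^ 2 + (x' t) ^ 2) := by
  obtain ⟨M, hM, hlarge⟩ := exists_forall_mul_le_of_periodic hT hh_per hlo (half_lt_self hμ0)
  set C := (a + μlo / 2) * M ^ 2 + b * M
  set m := min 1 (μlo / 2)
  have hm : 0 < m := lt_min one_pos (half_pos hμ0)
  set χ := 1 + 2 * C / m
  have hχ : 1 ≤ χ := le_add_of_nonneg_right (by positivity)
  refine ⟨χ, m / 2, (1 + a) / 2 + b, by positivity, half_pos hm, by positivity, ?_⟩
  intro x x' _ t hx hS
  have hχS : χ < x t ^ 2 + x' t ^ 2 := (le_self_pow₀ hχ two_ne_zero).trans_lt hS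
  have hangular : m / 2 < angularSpeed (x t) (x' t) (h t (x t)) :=
    half_min_lt_angularSpeed (half_pos hμ0) (by positivity)
      (sq_sub_le_mul_of_forall_ge (half_pos hμ0).le ha.le hb.le hM.le (hlarge t) (hgrowth t) hx)
      (by linarith [show χ = 1 + 2 * C / m from rfl])
  have hradial : radialSpeed (x t) (x' t) (h t (x t)) < ((1 + a) / 2 + b) * √(x t ^ 2 + x' t ^ 2) :=
    radialSpeed_lt ha.le hb hx (hgrowth t _ hx) (by linarith)
  exact ⟨hangular, hradial, lt_div_mul_mul_of_lt_mul (half_pos hm) hangular (by positivity)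
    (sqrt_pos.2 (by linarith)) hradial⟩

theorem statement10
    (T : ℝ) (hT : 0 < T)
    (h : ℝ → ℝ → ℝ)
    (hh_cont : ContinuousOn (fun q : ℝ × ℝ => h q.1 q.2) (univ ×ˢ Ici (0 : ℝ)))
    (hh_per : ∀ t x, h (t + T) x = h t x)
    (μlo μhi : ℝ) (hμ0 : 0 < μlo) (hμ : μlo ≤ μhi)
    (hlo : ∀ ε > (0 : ℝ), ∃ M : ℝ, 0 < M ∧ ∀ t ∈ Icc (0 : ℝ) T, ∀ x : ℝ, M ≤ x →
      μlo - ε < h t x / x)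
    (hhi : ∀ ε > (0 : ℝ), ∃ M : ℝ, 0 < M ∧ ∀ t ∈ Icc (0 : ℝ) T, ∀ x : ℝ, M ≤ x →
      h t x / x < μhi + ε)
    (a b : ℝ) (ha : 0 < a) (hb : 0 < b)
    (hgrowth : ∀ t : ℝ, ∀ x : ℝ, 0 ≤ x → |h t x| ≤ a * x + b) :
    ∃ χbar θ₀ l₀ : ℝ, 0 < χbar ∧ 0 < θ₀ ∧ 0 < l₀ ∧
      ∀ x x' : ℝ → ℝ,
        (∀ t : ℝ, HasDerivAt x (x' t) t ∧ HasDerivAt x' (-(h t (x t))) t) →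
        ∀ t : ℝ, 0 ≤ x t → χbar ^ 2 < (x t) ^ 2 + (x' t) ^ 2 →
          -- the angular velocity −θ' is bounded from below by θ₀
          θ₀ < ((x' t) ^ 2 + x t * h t (x t)) / ((x t) ^ 2 + (x' t) ^ 2) ∧
          -- the radial velocity |ϱ'| is bounded by l₀ ϱ
          |x' t * (x t - h t (x t))| / Real.sqrt ((x t) ^ 2 + (x' t) ^ 2) <
            l₀ * Real.sqrt ((x t) ^ 2 + (x' t) ^ 2) ∧
          -- consequently |dϱ/d(−θ)| < K ϱ with K = l₀/θ₀
          |x' t * (x t - h t (x t))| / Real.sqrt ((x t) ^ 2 + (x' t) ^ 2) <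
            (l₀ / θ₀) * (((x' t) ^ 2 + x t * h t (x t)) / ((x t) ^ 2 + (x' t) ^ 2)) *
              Real.sqrt ((x t) ^ 2 + (x' t) ^ 2) :=
  statement10_general T hT h hh_per μlo hμ0 hlo a b ha hb hgrowth
end

section
/- Let 0 < μ₁ ≤ μ₂ be constants and α < β real numbers. Let p : (α,β) → ℝ be measurable with μ₁ ≤ p(t) ≤ μ₂ for almost every t ∈ (α,β), and let v : [α,β] → ℝ be continuous, C¹ on (α,β), belonging to H²_loc(α,β), satisfying v''(t) + p(t)v(t) = 0 for almost every t ∈ (α,β), with v(α) = v(β) = 0 and v(t) > 0 for all t ∈ (α,β). Then π/√μ₂ ≤ β − α ≤ π/√μ₁. -/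
open Real Set MeasureTheory Filter Topology

/-!
Sturm comparison with `w t = sin (s (t - α))`, a solution of `w'' + s² w = 0`. Being a primitive
of `v''`, `v'` is absolutely continuous, so the Wronskian `W = v w' - v' w` satisfies
`W b - W a = ∫ t in a..b, (p - s²) v w`. Since `v` vanishes at `α` and `β` and `v'` is bounded,
`W` tends to `0` at an endpoint where `w` vanishes.

* `s = √μ₁`: if `β - α > π / s`, then `γ = α + π / s < β` and `W` increases on `(α, γ]` from `0`,
  yet `W γ = -s v γ < 0`.
* `s = π / (β - α)`: if `β - α < π / √μ₂`, then `p ≤ μ₂ < s²`, so `W` decreases on `(α, β)` from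
  `0` to `0`, hence vanishes there; but `W d - W c = ∫ t in c..d, (p - s²) v w < 0`.
-/

theorem absolutelyContinuousOnInterval_of_hasDerivAt {f f' : ℝ → ℝ} {a b : ℝ}
    (hf : ∀ t ∈ uIcc a b, HasDerivAt f (f' t) t) (hf' : ContinuousOn f' (uIcc a b)) :
    AbsolutelyContinuousOnInterval f a b := by
  obtain ⟨C, hC⟩ := isCompact_uIcc.exists_bound_of_continuousOn hf'
  refine LipschitzOnWith.absolutelyContinuousOnInterval (K := C.toNNReal) ?_
  refine (convex_uIcc a b).lipschitzOnWith_of_nnnorm_hasDerivWithin_le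
    (fun t ht => (hf t ht).hasDerivWithinAt) fun t ht => ?_
  rw [← NNReal.coe_le_coe, coe_nnnorm]
  exact (hC t ht).trans (le_coe_toNNReal C)

def wronskian (v v' w w' : ℝ → ℝ) (t : ℝ) : ℝ := v t * w' t - v' t * w t

theorem wronskian_sub_eq_integral {v v' v'' w w' : ℝ → ℝ} {m a b : ℝ}
    (hv : ∀ t ∈ uIcc a b, HasDerivAt v (v' t) t)
    (hv' : ∀ t ∈ uIcc a b, v' t - v' a = ∫ x in a..t, v'' x)
    (hv'' : IntervalIntegrable v'' volume a b)
    (hw : ∀ t, HasDerivAt w (w' t) t) (hw' : ∀ t, HasDerivAt w' (-(m * w t)) t) :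
    wronskian v v' w w' b - wronskian v v' w w' a = ∫ t in a..b, (-(m * v t) - v'' t) * w t := by
  set P : ℝ → ℝ := fun t => v' a + ∫ x in a..t, v'' x
  have hP : ∀ t ∈ uIcc a b, P t = v' t := fun t ht => by simp only [P]; linarith [hv' t ht]
  have hPac : AbsolutelyContinuousOnInterval P a b :=
    (absolutelyContinuousOnInterval_of_hasDerivAt (fun t _ => hasDerivAt_const t _)
      continuousOn_const).add (hv''.absolutelyContinuousOnInterval_intervalIntegral left_mem_uIcc)
  have hwc : Continuous w := continuous_iff_continuousAt.2 fun t => (hw t).continuousAt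
  have hwac : AbsolutelyContinuousOnInterval w a b :=
    absolutelyContinuousOnInterval_of_hasDerivAt (fun t _ => hw t)
      fun t _ => (hw' t).continuousAt.continuousWithinAt
  have hw'ac : AbsolutelyContinuousOnInterval w' a b :=
    absolutelyContinuousOnInterval_of_hasDerivAt (fun t _ => hw' t)
      (continuous_const.mul hwc).neg.continuousOn
  have hvac : AbsolutelyContinuousOnInterval v a b :=
    absolutelyContinuousOnInterval_of_hasDerivAt hv
      (hPac.continuousOn.congr fun t ht => (hP t ht).symm)
  have hderiv : ∀ᵐ t, t ∈ uIoc a b →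
      deriv (fun t => v t * w' t - P t * w t) t = (-(m * v t) - v'' t) * w t := by
    filter_upwards [hv''.ae_hasDerivAt_integral] with t hP' ht
    have ht := uIoc_subset_uIcc ht
    have hd : HasDerivAt (fun t => v t * w' t - P t * w t)
        (v' t * w' t + v t * -(m * w t) - ((0 + v'' t) * w t + P t * w' t)) t :=
      ((hv t ht).mul (hw' t)).sub
        (((hasDerivAt_const t (v' a)).add (hP' ht a left_mem_uIcc)).mul (hw t))
    rw [hd.deriv, hP t ht]
    ring
  have hWac : AbsolutelyContinuousOnInterval (fun t => v t * w' t - P t * w t) a b :=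
    (hvac.fun_mul hw'ac).sub (hPac.fun_mul hwac)
  rw [← intervalIntegral.integral_congr_ae hderiv, hWac.integral_deriv_eq_sub,
    hP a left_mem_uIcc, hP b right_mem_uIcc]
  rfl

theorem tendsto_wronskian_zero {l : Filter ℝ} {v v' w w' : ℝ → ℝ} {A : ℝ}
    (hv : Tendsto v l (𝓝 0)) (hv' : IsBoundedUnder (· ≤ ·) l (norm ∘ v'))
    (hw : Tendsto w l (𝓝 0)) (hw' : Tendsto w' l (𝓝 A)) :
    Tendsto (wronskian v v' w w') l (𝓝 0) := by
  have := (hv.mul hw').sub (hw.zero_mul_isBoundedUnder_le hv')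
  rw [zero_mul, sub_zero] at this
  exact this.congr fun t => by rw [wronskian, mul_comm (w t)]

theorem hasDerivAt_mul_sub (s c t : ℝ) : HasDerivAt (fun t => s * (t - c)) s t := by
  simpa using ((hasDerivAt_id t).sub_const c).const_mul s

theorem hasDerivAt_sin_mul_sub (s c t : ℝ) :
    HasDerivAt (fun t => sin (s * (t - c))) (s * cos (s * (t - c))) t :=
  ((hasDerivAt_sin _).comp t (hasDerivAt_mul_sub s c t)).congr_deriv (mul_comm _ _)

theorem hasDerivAt_mul_cos_mul_sub (s c t : ℝ) :
    HasDerivAt (fun t => s * cos (s * (t - c))) (-(s ^ 2 * sin (s * (t - c)))) t :=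
  (((hasDerivAt_cos _).comp t (hasDerivAt_mul_sub s c t)).const_mul s).congr_deriv (by ring)

theorem MonotoneOn.nonneg_of_tendsto_nhdsGT {f : ℝ → ℝ} {a b : ℝ} (hf : MonotoneOn f (Ioc a b))
    (hab : a < b) (ha : Tendsto f (𝓝[>] a) (𝓝 0)) : 0 ≤ f b :=
  le_of_tendsto ha (eventually_of_mem (Ioo_mem_nhdsGT hab) fun _ ht =>
    hf (Ioo_subset_Ioc_self ht) (right_mem_Ioc.2 hab) ht.2.le)

theorem AntitoneOn.eq_zero_of_tendsto {f : ℝ → ℝ} {a b : ℝ} (hf : AntitoneOn f (Ioo a b))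
    (ha : Tendsto f (𝓝[>] a) (𝓝 0)) (hb : Tendsto f (𝓝[<] b) (𝓝 0)) {c : ℝ} (hc : c ∈ Ioo a b) :
    f c = 0 :=
  le_antisymm
    (ge_of_tendsto ha (eventually_of_mem (Ioo_mem_nhdsGT hc.1) fun _ ht =>
      hf ⟨ht.1, ht.2.trans hc.2⟩ hc ht.2.le))
    (le_of_tendsto hb (eventually_of_mem (Ioo_mem_nhdsLT hc.2) fun _ ht =>
      hf hc ⟨hc.1.trans ht.1, ht.2⟩ ht.1.le))

structure IsNodalSolution (p v v' v'' : ℝ → ℝ) (α β : ℝ) : Prop where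
  continuousOn : ContinuousOn v (Icc α β)
  hasDerivAt : ∀ t ∈ Ioo α β, HasDerivAt v (v' t) t
  sub_eq_integral : ∀ a ∈ Ioo α β, ∀ b ∈ Ioo α β, v' b - v' a = ∫ t in a..b, v'' t
  integrableOn : IntegrableOn v'' (Ioo α β)
  ae_add_mul_eq_zero : ∀ᵐ t ∂volume.restrict (Ioo α β), v'' t + p t * v t = 0
  left_eq_zero : v α = 0
  right_eq_zero : v β = 0
  pos : ∀ t ∈ Ioo α β, 0 < v t

namespace IsNodalSolution

variable {p v v' v'' : ℝ → ℝ} {α β : ℝ}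

theorem abs_deriv_le (h : IsNodalSolution p v v' v'' α β) {c t : ℝ} (hc : c ∈ Ioo α β)
    (ht : t ∈ Ioo α β) : |v' t| ≤ |v' c| + ∫ x in Ioo α β, |v'' x| := by
  have hsub : uIoc c t ⊆ Ioo α β := uIoc_subset_uIcc.trans (ordConnected_Ioo.uIcc_subset hc ht)
  calc |v' t| = |v' c + ∫ x in c..t, v'' x| := by
        rw [← h.sub_eq_integral c hc t ht, add_sub_cancel]
    _ ≤ |v' c| + ∫ x in uIoc c t, |v'' x| :=
      (abs_add_le _ _).trans (add_le_add le_rfl (by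
        simpa only [Real.norm_eq_abs] using
          intervalIntegral.norm_integral_le_integral_norm_uIoc (f := v'') (μ := volume)))
    _ ≤ |v' c| + ∫ x in Ioo α β, |v'' x| :=
      add_le_add le_rfl (setIntegral_mono_set h.integrableOn.abs
        (Eventually.of_forall fun _ => abs_nonneg _) hsub.eventuallyLE)

theorem tendsto_wronskian (h : IsNodalSolution p v v' v'' α β) (hαβ : α < β) {e : ℝ}
    (he : e ∈ Icc α β) (hve : v e = 0) {w w' : ℝ → ℝ} (hw : Continuous w) (hw' : Continuous w')
    (hwe : w e = 0) : Tendsto (wronskian v v' w w') (𝓝[Ioo α β] e) (𝓝 0) := by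
  obtain ⟨c, hc⟩ := nonempty_Ioo.2 hαβ
  refine tendsto_wronskian_zero ?_ ?_ ?_ ((hw'.tendsto e).mono_left nhdsWithin_le_nhds)
  · exact hve ▸ (h.continuousOn e he).tendsto.mono_left (nhdsWithin_mono _ Ioo_subset_Icc_self)
  · exact isBoundedUnder_of_eventually_le
      (eventually_nhdsWithin_of_forall fun t ht => h.abs_deriv_le hc ht)
  · exact hwe ▸ (hw.tendsto e).mono_left nhdsWithin_le_nhds

theorem ae_eq_coeff_mul (h : IsNodalSolution p v v' v'' α β) (m : ℝ) (w : ℝ → ℝ) :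
    (fun t => (-(m * v t) - v'' t) * w t) =ᵐ[volume.restrict (Ioo α β)]
      fun t => (p t - m) * (v t * w t) := by
  filter_upwards [h.ae_add_mul_eq_zero] with t ht
  rw [← neg_eq_of_add_eq_zero_left ht]
  ring

theorem wronskian_sub_eq (h : IsNodalSolution p v v' v'' α β) {a b : ℝ} (ha : a ∈ Ioo α β)
    (hb : b ∈ Ioo α β) {m : ℝ} {w w' : ℝ → ℝ} (hw : ∀ t, HasDerivAt w (w' t) t)
    (hw' : ∀ t, HasDerivAt w' (-(m * w t)) t) :
    wronskian v v' w w' b - wronskian v v' w w' a = ∫ t in a..b, (p t - m) * (v t * w t) := by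
  have hsub : uIcc a b ⊆ Ioo α β := ordConnected_Ioo.uIcc_subset ha hb
  rw [wronskian_sub_eq_integral (fun t ht => h.hasDerivAt t (hsub ht))
    (fun t ht => h.sub_eq_integral a ha t (hsub ht))
    ((h.integrableOn.mono_set hsub).intervalIntegrable) hw hw']
  exact intervalIntegral.integral_congr_ae_restrict
    (ae_restrict_of_ae_restrict_of_subset (uIoc_subset_uIcc.trans hsub) (h.ae_eq_coeff_mul m w))

theorem intervalIntegrable_coeff_mul (h : IsNodalSolution p v v' v'' α β) {a b : ℝ}
    (ha : a ∈ Ioo α β) (hb : b ∈ Ioo α β) (m : ℝ) {w : ℝ → ℝ} (hw : Continuous w) :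
    IntervalIntegrable (fun t => (p t - m) * (v t * w t)) volume a b := by
  have hsub : uIcc a b ⊆ Ioo α β := ordConnected_Ioo.uIcc_subset ha hb
  have hv : ContinuousOn v (uIcc a b) :=
    h.continuousOn.mono (hsub.trans Ioo_subset_Icc_self)
  refine IntervalIntegrable.congr_ae ?_
    (ae_restrict_of_ae_restrict_of_subset (uIoc_subset_uIcc.trans hsub) (h.ae_eq_coeff_mul m w))
  exact (((continuousOn_const.mul hv).neg.intervalIntegrable).sub
    (h.integrableOn.mono_set hsub).intervalIntegrable).mul_continuousOn hw.continuousOn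

theorem monotoneOn_wronskian (h : IsNodalSolution p v v' v'' α β) {s : Set ℝ}
    (hs : s ⊆ Ioo α β) (hsc : s.OrdConnected) {m : ℝ} {w w' : ℝ → ℝ}
    (hw : ∀ t, HasDerivAt w (w' t) t) (hw' : ∀ t, HasDerivAt w' (-(m * w t)) t)
    (hw0 : ∀ t ∈ s, 0 ≤ w t) (hp : ∀ᵐ t ∂volume.restrict (Ioo α β), m ≤ p t) :
    MonotoneOn (wronskian v v' w w') s := by
  intro a ha b hb hab
  have hsub : Icc a b ⊆ s := hsc.out ha hb
  have := intervalIntegral.integral_nonneg_of_ae_restrict hab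
    (f := fun t => (p t - m) * (v t * w t)) (by
      filter_upwards [ae_restrict_of_ae_restrict_of_subset (hsub.trans hs) hp,
        ae_restrict_mem measurableSet_Icc] with t hpt ht
      exact mul_nonneg (sub_nonneg.2 hpt)
        (mul_nonneg (h.pos t (hs (hsub ht))).le (hw0 t (hsub ht))))
  linarith [h.wronskian_sub_eq (hs ha) (hs hb) hw hw']

theorem antitoneOn_wronskian (h : IsNodalSolution p v v' v'' α β) {s : Set ℝ}
    (hs : s ⊆ Ioo α β) (hsc : s.OrdConnected) {m : ℝ} {w w' : ℝ → ℝ}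
    (hw : ∀ t, HasDerivAt w (w' t) t) (hw' : ∀ t, HasDerivAt w' (-(m * w t)) t)
    (hw0 : ∀ t ∈ s, 0 ≤ w t) (hp : ∀ᵐ t ∂volume.restrict (Ioo α β), p t ≤ m) :
    AntitoneOn (wronskian v v' w w') s := by
  intro a ha b hb hab
  have hsub : Icc a b ⊆ s := hsc.out ha hb
  have := intervalIntegral.integral_nonneg_of_ae_restrict hab
    (f := fun t => -((p t - m) * (v t * w t))) (by
      filter_upwards [ae_restrict_of_ae_restrict_of_subset (hsub.trans hs) hp,
        ae_restrict_mem measurableSet_Icc] with t hpt ht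
      exact neg_nonneg.2 (mul_nonpos_of_nonpos_of_nonneg (sub_nonpos.2 hpt)
        (mul_nonneg (h.pos t (hs (hsub ht))).le (hw0 t (hsub ht)))))
  rw [intervalIntegral.integral_neg] at this
  linarith [h.wronskian_sub_eq (hs ha) (hs hb) hw hw']

theorem integral_coeff_mul_neg (h : IsNodalSolution p v v' v'' α β) {c d : ℝ}
    (hc : c ∈ Ioo α β) (hd : d ∈ Ioo α β) (hcd : c < d) {μ m : ℝ} (hμm : μ < m)
    (hp : ∀ᵐ t ∂volume.restrict (Ioo α β), p t ≤ μ) {w : ℝ → ℝ} (hw : Continuous w)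
    (hw_pos : ∀ t ∈ Ioo α β, 0 < w t) :
    ∫ t in c..d, (p t - m) * (v t * w t) < 0 := by
  have hsub : Icc c d ⊆ Ioo α β := Icc_subset_Ioo hc.1 hd.2
  have hvw : ContinuousOn (fun t => v t * w t) (Icc c d) :=
    (h.continuousOn.mono (hsub.trans Ioo_subset_Icc_self)).mul hw.continuousOn
  have hvw_pos : ∀ t ∈ Icc c d, 0 < v t * w t := fun t ht =>
    mul_pos (h.pos t (hsub ht)) (hw_pos t (hsub ht))
  calc ∫ t in c..d, (p t - m) * (v t * w t) ≤ ∫ t in c..d, (μ - m) * (v t * w t) := by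
        refine intervalIntegral.integral_mono_ae_restrict hcd.le
          (h.intervalIntegrable_coeff_mul hc hd m hw)
          ((continuousOn_const.mul hvw).intervalIntegrable_of_Icc hcd.le) ?_
        filter_upwards [ae_restrict_of_ae_restrict_of_subset hsub hp,
          ae_restrict_mem measurableSet_Icc] with t hpt ht
        exact mul_le_mul_of_nonneg_right (by linarith) (hvw_pos t ht).le
    _ = (μ - m) * ∫ t in c..d, v t * w t := intervalIntegral.integral_const_mul _ _
    _ < 0 := mul_neg_of_neg_of_pos (sub_neg.2 hμm)
        (intervalIntegral.intervalIntegral_pos_of_pos_on (hvw.intervalIntegrable_of_Icc hcd.le)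
          (fun t ht => hvw_pos t (Ioo_subset_Icc_self ht)) hcd)

theorem pi_div_sqrt_le_sub (h : IsNodalSolution p v v' v'' α β) (hαβ : α < β) {μ : ℝ}
    (hp : ∀ᵐ t ∂volume.restrict (Ioo α β), p t ≤ μ) : π / √μ ≤ β - α := by
  by_contra! hlt
  have hβα : 0 < β - α := sub_pos.2 hαβ
  have hsqrt : 0 < √μ := (div_pos_iff_of_pos_left pi_pos).1 (hβα.trans hlt)
  set s := π / (β - α)
  have hs : 0 < s := div_pos pi_pos hβα
  have hμs : μ < s ^ 2 :=
    lt_sq_of_sqrt_lt ((lt_div_iff₀ hβα).2 ((lt_div_iff₀' hsqrt).1 hlt))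
  have hsβ : s * (β - α) = π := div_mul_cancel₀ π hβα.ne'
  set w := fun t => sin (s * (t - α))
  set w' := fun t => s * cos (s * (t - α))
  have hw : Continuous w := by fun_prop
  have hw' : Continuous w' := by fun_prop
  have hw_pos : ∀ t ∈ Ioo α β, 0 < w t := fun t ht =>
    sin_pos_of_pos_of_lt_pi (mul_pos hs (sub_pos.2 ht.1))
      (hsβ ▸ mul_lt_mul_of_pos_left (sub_lt_sub_right ht.2 α) hs)
  have hW : ∀ c ∈ Ioo α β, wronskian v v' w w' c = 0 := fun c hc =>
    (h.antitoneOn_wronskian subset_rfl ordConnected_Ioo (hasDerivAt_sin_mul_sub s α)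
      (hasDerivAt_mul_cos_mul_sub s α) (fun t ht => (hw_pos t ht).le)
      (hp.mono fun t ht => ht.trans hμs.le)).eq_zero_of_tendsto
      (nhdsWithin_Ioo_eq_nhdsGT hαβ ▸ h.tendsto_wronskian hαβ (left_mem_Icc.2 hαβ.le)
        h.left_eq_zero hw hw' (by simp))
      (nhdsWithin_Ioo_eq_nhdsLT hαβ ▸ h.tendsto_wronskian hαβ (right_mem_Icc.2 hαβ.le)
        h.right_eq_zero hw hw' (by simp [hsβ])) hc
  obtain ⟨c, hαc, hcβ⟩ := exists_between hαβ
  obtain ⟨d, hcd, hdβ⟩ := exists_between hcβ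
  have hc : c ∈ Ioo α β := ⟨hαc, hcβ⟩
  have hd : d ∈ Ioo α β := ⟨hαc.trans hcd, hdβ⟩
  have := h.integral_coeff_mul_neg hc hd hcd hμs hp hw hw_pos
  rw [← h.wronskian_sub_eq hc hd (hasDerivAt_sin_mul_sub s α) (hasDerivAt_mul_cos_mul_sub s α),
    hW c hc, hW d hd, sub_self] at this
  exact lt_irrefl 0 this

theorem sub_le_pi_div_sqrt (h : IsNodalSolution p v v' v'' α β) (hαβ : α < β) {μ : ℝ}
    (hμ : 0 < μ) (hp : ∀ᵐ t ∂volume.restrict (Ioo α β), μ ≤ p t) : β - α ≤ π / √μ := by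
  by_contra! hlt
  set s := √μ
  have hs : 0 < s := sqrt_pos.2 hμ
  set γ := α + π / s
  have hαγ : α < γ := lt_add_of_pos_right α (div_pos pi_pos hs)
  have hγβ : γ < β := by linarith
  have hsγ : s * (γ - α) = π := by rw [add_sub_cancel_left, mul_div_cancel₀ π hs.ne']
  set w := fun t => sin (s * (t - α))
  set w' := fun t => s * cos (s * (t - α))
  have hmono : MonotoneOn (wronskian v v' w w') (Ioc α γ) :=
    h.monotoneOn_wronskian (Ioc_subset_Ioo_right hγβ) ordConnected_Ioc
      (hasDerivAt_sin_mul_sub s α) (hasDerivAt_mul_cos_mul_sub s α)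
      (fun t ht => sin_nonneg_of_nonneg_of_le_pi (mul_nonneg hs.le (sub_nonneg.2 ht.1.le))
        (hsγ ▸ mul_le_mul_of_nonneg_left (sub_le_sub_right ht.2 α) hs.le))
      (by rwa [sq_sqrt hμ.le])
  have h0 := hmono.nonneg_of_tendsto_nhdsGT hαγ (nhdsWithin_Ioo_eq_nhdsGT hαβ ▸
    h.tendsto_wronskian hαβ (left_mem_Icc.2 hαβ.le) h.left_eq_zero (by fun_prop) (by fun_prop)
      (by simp [w]))
  have hWγ : wronskian v v' w w' γ = -(s * v γ) := by simp [wronskian, w, w', hsγ, mul_comm]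
  linarith [mul_pos hs (h.pos γ ⟨hαγ, hγβ⟩)]

end IsNodalSolution

theorem statement13_general
    (μ₁ μ₂ : ℝ) (hμ₁ : 0 < μ₁)
    (α β : ℝ) (hαβ : α < β)
    (p : ℝ → ℝ) (hp_meas : Measurable p)
    (hp_bounds : ∀ᵐ t ∂(volume.restrict (Ioo α β)), μ₁ ≤ p t ∧ p t ≤ μ₂)
    (v v' : ℝ → ℝ)
    (hv_cont : ContinuousOn v (Icc α β))
    (hv_deriv : ∀ t ∈ Ioo α β, HasDerivAt v (v' t) t)
    -- v ∈ H²loc and v'' + p v = 0 a.e., in integrated form: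
    (hv'' : ∃ v'' : ℝ → ℝ,
      (∀ a ∈ Ioo α β, ∀ b ∈ Ioo α β, v' b - v' a = ∫ t in a..b, v'' t) ∧
      (∀ᵐ t ∂(volume.restrict (Ioo α β)), v'' t + p t * v t = 0))
    (hvα : v α = 0) (hvβ : v β = 0)
    (hv_pos : ∀ t ∈ Ioo α β, 0 < v t) :
    π / Real.sqrt μ₂ ≤ β - α ∧ β - α ≤ π / Real.sqrt μ₁ := by
  obtain ⟨v'', hv'_eq, hode⟩ := hv''
  have hpv : IntegrableOn (fun t => p t * v t) (Ioo α β) :=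
    (hv_cont.integrableOn_Icc.mono_set Ioo_subset_Icc_self).bdd_mul (c := μ₂)
      hp_meas.aestronglyMeasurable (by
        filter_upwards [hp_bounds] with t ht
        rw [Real.norm_eq_abs, abs_le]
        constructor <;> linarith [ht.1, ht.2])
  have h : IsNodalSolution p v v' v'' α β :=
    { continuousOn := hv_cont
      hasDerivAt := hv_deriv
      sub_eq_integral := hv'_eq
      integrableOn := hpv.neg.congr (by
        filter_upwards [hode] with t ht
        exact (eq_neg_of_add_eq_zero_left ht).symm)
      ae_add_mul_eq_zero := hode
      left_eq_zero := hvα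
      right_eq_zero := hvβ
      pos := hv_pos }
  exact ⟨h.pi_div_sqrt_le_sub hαβ (hp_bounds.mono fun _ ht => ht.2),
    h.sub_le_pi_div_sqrt hαβ hμ₁ (hp_bounds.mono fun _ ht => ht.1)⟩

theorem statement13
    (μ₁ μ₂ : ℝ) (hμ₁ : 0 < μ₁) (hμ : μ₁ ≤ μ₂)
    (α β : ℝ) (hαβ : α < β)
    (p : ℝ → ℝ) (hp_meas : Measurable p)
    (hp_bounds : ∀ᵐ t ∂(volume.restrict (Ioo α β)), μ₁ ≤ p t ∧ p t ≤ μ₂)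
    (v v' : ℝ → ℝ)
    (hv_cont : ContinuousOn v (Icc α β))
    (hv_deriv : ∀ t ∈ Ioo α β, HasDerivAt v (v' t) t)
    (hv'_cont : ContinuousOn v' (Ioo α β))
    -- v ∈ H²loc and v'' + p v = 0 a.e., in integrated form:
    (hv'' : ∃ v'' : ℝ → ℝ,
      (∀ a ∈ Ioo α β, ∀ b ∈ Ioo α β, v' b - v' a = ∫ t in a..b, v'' t) ∧
      (∀ᵐ t ∂(volume.restrict (Ioo α β)), v'' t + p t * v t = 0))
    (hvα : v α = 0) (hvβ : v β = 0)
    (hv_pos : ∀ t ∈ Ioo α β, 0 < v t) :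
    π / Real.sqrt μ₂ ≤ β - α ∧ β - α ≤ π / Real.sqrt μ₁ :=
  statement13_general μ₁ μ₂ hμ₁ α β hαβ p hp_meas hp_bounds v v' hv_cont hv_deriv hv'' hvα hvβ
    hv_pos
end
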